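/- arXiv:2007.13166 — 2 statements merged into one kernel-verified Lean document; each statement's English description precedes it below -/
import Mathlib

section
/- Let u_i ∈ ℝ, and let R_i be a polynomial satisfying the cell-average conservation property (1/Δx)∫_{x_i - Δx/2}^{x_i + Δx/2} R_i(x) dx = u_i. Let M' and m' be the maximum and minimum of R_i on [x_i - Δx/2, x_i + Δx/2], and suppose m ≤ u_i ≤ M with m' < u_i < M' possible. Define ξ_i = min{1, |M - u_i|/|M' - u_i|, |m - u_i|/|m' - u_i|} (with the convention that a ratio is 1 if its denominator is 0) and the rescaled polynomial R̃_i(x) = u_i + ξ_i (R_i(x) - u_i). Then R̃_i has the same cell average u_i and satisfies m ≤ R̃_i(x) ≤ M for all x in [x_i - Δx/2, x_i + Δx/2]. -/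
open intervalIntegral

/-! The map `t ↦ u + ξ (t - u)` is affine and fixes `u`, so it preserves the cell average `u`.
Where `R > u`, the deviation `R - u ≤ M' - u` is scaled by `ξ ≤ (M - u) / (M' - u)`, so it stays
below `M - u`; where `R < u` the same holds with `m, m'`, which is the upper case after `t ↦ -t`. -/

theorem integral_add_mul_sub_eq {f : ℝ → ℝ} {a b u : ℝ} (ξ : ℝ)
    (hf : IntervalIntegrable f MeasureTheory.volume a b) (hu : ∫ x in a..b, f x = (b - a) * u) :
    ∫ x in a..b, (u + ξ * (f x - u)) = (b - a) * u := by
  have hg : IntervalIntegrable (fun x => ξ * (f x - u)) MeasureTheory.volume a b :=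
    (hf.sub intervalIntegrable_const).const_mul ξ
  rw [integral_add intervalIntegrable_const hg, integral_const_mul,
    integral_sub hf intervalIntegrable_const, hu, integral_const, smul_eq_mul]
  ring

theorem add_mul_sub_le_of_le_ratio {u t M M' ξ : ℝ} (hξ : 0 ≤ ξ) (huM : u ≤ M) (htM' : t ≤ M')
    (hξM : ξ ≤ if M' = u then 1 else |M - u| / |M' - u|) :
    u + ξ * (t - u) ≤ M := by
  rcases le_or_gt t u with htu | hut
  · nlinarith
  have hM'u : 0 < M' - u := by linarith
  rw [if_neg (sub_pos.1 hM'u).ne', abs_of_nonneg (sub_nonneg.2 huM), abs_of_pos hM'u,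
    le_div_iff₀ hM'u] at hξM
  nlinarith

theorem le_add_mul_sub_of_le_ratio {u t m m' ξ : ℝ} (hξ : 0 ≤ ξ) (hmu : m ≤ u) (hm't : m' ≤ t)
    (hξm : ξ ≤ if m' = u then 1 else |m - u| / |m' - u|) :
    m ≤ u + ξ * (t - u) := by
  rw [abs_sub_comm m, abs_sub_comm m'] at hξm
  have h := add_mul_sub_le_of_le_ratio (u := -u) (t := -t) (M := -m) (M' := -m') hξ
    (neg_le_neg hmu) (neg_le_neg hm't) (by simpa only [neg_sub_neg, neg_inj] using hξm)
  linarith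

/-- Zhang–Shu MPP linear scaling limiter: the rescaled polynomial `R̃ = u + ξ(R - u)`
keeps the cell average `u` and is bounded by the global bounds `m ≤ R̃ ≤ M` on the cell. -/
theorem mpp_limiter (Δx xi u m M : ℝ) (hΔx : 0 < Δx)
    (R : Polynomial ℝ)
    (havg : (1 / Δx) * ∫ x in (xi - Δx / 2)..(xi + Δx / 2), R.eval x = u)
    (M' m' : ℝ)
    (hM' : IsGreatest ((fun x => R.eval x) '' Set.Icc (xi - Δx / 2) (xi + Δx / 2)) M')
    (hm' : IsLeast ((fun x => R.eval x) '' Set.Icc (xi - Δx / 2) (xi + Δx / 2)) m')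
    (hmu : m ≤ u) (huM : u ≤ M)
    (ξ : ℝ)
    (hξ : ξ = min 1 (min (if M' = u then 1 else |M - u| / |M' - u|)
                         (if m' = u then 1 else |m - u| / |m' - u|)))
    (Rt : ℝ → ℝ)
    (hRt : ∀ x, Rt x = u + ξ * (R.eval x - u)) :
    (1 / Δx) * (∫ x in (xi - Δx / 2)..(xi + Δx / 2), Rt x) = u ∧
    ∀ x ∈ Set.Icc (xi - Δx / 2) (xi + Δx / 2), m ≤ Rt x ∧ Rt x ≤ M := by
  have hwidth : xi + Δx / 2 - (xi - Δx / 2) = Δx := by ring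
  have hint : ∫ x in (xi - Δx / 2)..(xi + Δx / 2), R.eval x = Δx * u := by
    rw [← havg]; field_simp
  have hξ0 : 0 ≤ ξ := by rw [hξ]; split_ifs <;> positivity
  have hξM : ξ ≤ if M' = u then 1 else |M - u| / |M' - u| :=
    hξ ▸ (min_le_right _ _).trans (min_le_left _ _)
  have hξm : ξ ≤ if m' = u then 1 else |m - u| / |m' - u| :=
    hξ ▸ (min_le_right _ _).trans (min_le_right _ _)
  refine ⟨?_, fun x hx => ?_⟩
  · rw [integral_congr fun x _ => hRt x, integral_add_mul_sub_eq ξ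
      (R.continuous.intervalIntegrable _ _) (by rw [hwidth, hint]), hwidth]
    field_simp
  · rw [hRt]
    exact ⟨le_add_mul_sub_of_le_ratio hξ0 hmu (hm'.2 ⟨x, hx, rfl⟩) hξm,
      add_mul_sub_le_of_le_ratio hξ0 huM (hM'.2 ⟨x, hx, rfl⟩) hξM⟩
end

section
/- Strang splitting for rigid rotation shifts: define shift operators on functions u : ℝ² → ℝ by (e^{τ𝒳}u)(x,y) = u(x + yτ, y) and (e^{τ𝒴}u)(x,y) = u(x, y - xτ). Then for u of class C³ (with bounded derivatives up to order 3), the Strang composition (e^{(Δt/2)𝒴} e^{Δt𝒳} e^{(Δt/2)𝒴} u)(x,y) agrees with the exact rotated solution u(x cos Δt + y sin Δt, -x sin Δt + y cos Δt) up to O(Δt³) as Δt → 0, locally uniformly in (x,y). -/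
/-- Shift along the x-axis: exact solution operator of `u_t - y u_x = 0` over time `τ`. -/
noncomputable def shiftX (τ : ℝ) (u : ℝ × ℝ → ℝ) : ℝ × ℝ → ℝ :=
  fun p => u (p.1 + p.2 * τ, p.2)

/-- Shift along the y-axis: exact solution operator of `u_t + x u_y = 0` over time `τ`. -/
noncomputable def shiftY (τ : ℝ) (u : ℝ × ℝ → ℝ) : ℝ × ℝ → ℝ :=
  fun p => u (p.1, p.2 - p.1 * τ)

/-!
Both shifts compose `u` with a shear, so the Strang composition composes `u` with the product
of three shear matrices. That product is the rotation matrix with `cos t` replaced by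
`1 - t²/2` and the two entries `± sin t` by `t` and `-(t - t³/4)`; it therefore differs from
the rotation by `O(|t|³ ‖p‖)`. A bound on `Du` makes `u` Lipschitz, which carries this over
to the values of `u`.
-/

lemma shiftY_shiftX_shiftY_apply (t : ℝ) (u : ℝ × ℝ → ℝ) (p : ℝ × ℝ) :
    shiftY (t / 2) (shiftX t (shiftY (t / 2) u)) p =
      u (p.1 * (1 - t ^ 2 / 2) + p.2 * t, p.1 * -(t - t ^ 3 / 4) + p.2 * (1 - t ^ 2 / 2)) := by
  simp only [shiftX, shiftY]
  congr 1
  ext <;> ring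

namespace Real

lemma abs_sin_sub_cubic_le {t a : ℝ} (ht : |t| ≤ 1) (ha : |a - 1 / 6| ≤ 1 / 6) :
    |sin t - (t - a * t ^ 3)| ≤ |t| ^ 3 := by
  have ht3 : 0 ≤ |t| ^ 3 := by positivity
  have ht5 : |t| ^ 5 ≤ |t| ^ 3 := pow_le_pow_of_le_one (abs_nonneg t) ht (by norm_num)
  calc |sin t - (t - a * t ^ 3)|
      = |(sin t - (t - t ^ 3 / 6)) + (a - 1 / 6) * t ^ 3| := by ring_nf
    _ ≤ |sin t - (t - t ^ 3 / 6)| + |a - 1 / 6| * |t| ^ 3 := by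
        rw [← abs_pow, ← abs_mul]; exact abs_add_le _ _
    _ ≤ |t| ^ 5 / 100 + 1 / 6 * |t| ^ 3 := by gcongr; exact sin_bound ht
    _ ≤ |t| ^ 3 := by linarith

lemma abs_cos_sub_quadratic_le {t : ℝ} (ht : |t| ≤ 1) :
    |cos t - (1 - t ^ 2 / 2)| ≤ |t| ^ 3 := by
  have ht4 : |t| ^ 4 ≤ |t| ^ 3 := pow_le_pow_of_le_one (abs_nonneg t) ht (by norm_num)
  linarith [cos_bound ht, pow_nonneg (abs_nonneg t) 3]

end Real

lemma abs_linear_sub_le (p : ℝ × ℝ) {a b a' b' ε : ℝ}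
    (ha : |a - a'| ≤ ε) (hb : |b - b'| ≤ ε) :
    |p.1 * a + p.2 * b - (p.1 * a' + p.2 * b')| ≤ 2 * ε * ‖p‖ := by
  have h₁ : |p.1| ≤ ‖p‖ := norm_fst_le p
  have h₂ : |p.2| ≤ ‖p‖ := norm_snd_le p
  calc |p.1 * a + p.2 * b - (p.1 * a' + p.2 * b')|
      = |p.1 * (a - a') + p.2 * (b - b')| := by ring_nf
    _ ≤ |p.1| * |a - a'| + |p.2| * |b - b'| := by
        rw [← abs_mul, ← abs_mul]; exact abs_add_le _ _
    _ ≤ ‖p‖ * ε + ‖p‖ * ε := by gcongr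
    _ = 2 * ε * ‖p‖ := by ring

lemma norm_strang_sub_rotation_le {t : ℝ} (ht : |t| ≤ 1) (p : ℝ × ℝ) :
    ‖(p.1 * (1 - t ^ 2 / 2) + p.2 * t, p.1 * -(t - t ^ 3 / 4) + p.2 * (1 - t ^ 2 / 2)) -
        (p.1 * Real.cos t + p.2 * Real.sin t, -p.1 * Real.sin t + p.2 * Real.cos t)‖ ≤
      2 * |t| ^ 3 * ‖p‖ := by
  have hcos : |1 - t ^ 2 / 2 - Real.cos t| ≤ |t| ^ 3 := by
    rw [abs_sub_comm]; exact Real.abs_cos_sub_quadratic_le ht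
  have hsin : |t - Real.sin t| ≤ |t| ^ 3 := by
    rw [abs_sub_comm]
    simpa using Real.abs_sin_sub_cubic_le (a := 0) ht (by norm_num)
  have hsin' : |-(t - t ^ 3 / 4) - -Real.sin t| ≤ |t| ^ 3 := by
    rw [neg_sub_neg]
    convert Real.abs_sin_sub_cubic_le (a := 1 / 4) ht (by norm_num [abs_of_nonneg]) using 4
    ring
  rw [Prod.norm_def, neg_mul_comm]
  exact max_le (abs_linear_sub_le p hcos hsin) (abs_linear_sub_le p hsin' hcos)

/-- Strang splitting for rigid rotation: for `u` of class C³ with bounded derivatives up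
to order 3, the composition `e^{(Δt/2)𝒴} e^{Δt𝒳} e^{(Δt/2)𝒴} u` agrees with the exact
rotated solution up to `O(Δt³)`, locally uniformly in `(x, y)`. -/
theorem strang_splitting_rigid_rotation
    (u : ℝ × ℝ → ℝ) (hu : ContDiff ℝ 3 u)
    (hbdd : ∀ n : ℕ, n ≤ 3 → ∃ C : ℝ, ∀ p, ‖iteratedFDeriv ℝ n u p‖ ≤ C) :
    ∀ K : Set (ℝ × ℝ), IsCompact K →
      ∃ C δ : ℝ, 0 < δ ∧ ∀ p ∈ K, ∀ Δt : ℝ, |Δt| ≤ δ →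
        |shiftY (Δt / 2) (shiftX Δt (shiftY (Δt / 2) u)) p
            - u (p.1 * Real.cos Δt + p.2 * Real.sin Δt,
                 -p.1 * Real.sin Δt + p.2 * Real.cos Δt)|
          ≤ C * |Δt| ^ 3 := by
  intro K hK
  obtain ⟨M, hM⟩ := hK.isBounded.exists_norm_le
  obtain ⟨L, hL⟩ := hbdd 1 le_add_self
  have hL₀ : 0 ≤ L := (norm_nonneg _).trans (hL 0)
  have hlip : ∀ P Q : ℝ × ℝ, |u P - u Q| ≤ L * ‖P - Q‖ := fun P Q =>
    convex_univ.norm_image_sub_le_of_norm_fderiv_le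
      (fun x _ => (hu.differentiable (by norm_num)) x) (fun x _ => by simpa using hL x)
      (Set.mem_univ Q) (Set.mem_univ P)
  refine ⟨L * (2 * M), 1, one_pos, fun p hp t ht => ?_⟩
  rw [shiftY_shiftX_shiftY_apply]
  calc _ ≤ L * (2 * |t| ^ 3 * ‖p‖) :=
        (hlip _ _).trans (by gcongr; exact norm_strang_sub_rotation_le ht p)
    _ ≤ L * (2 * |t| ^ 3 * M) := by gcongr; exact hM p hp
    _ = L * (2 * M) * |t| ^ 3 := by ring
end
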